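/- In the single-qubit model with state ρ = Diag(1−λ₂, λ₂), 0 < λ₂ ≤ 1/2, the Fisher information matrix of the measurement setting s = (θ, φ) in the parameters (λ₂, Re ρ₁₂, Im ρ₁₂), evaluated at ρ, equals I(ρ|s) = (2/(1 − cos²θ·(1−2λ₂)²)) · M(θ,φ), where M(θ,φ) is the 3×3 matrix with rows [2cos²θ, −cos φ·sin 2θ, sin φ·sin 2θ], [−cos φ·sin 2θ, 2cos²φ·sin²θ, −sin 2φ·sin²θ], [sin φ·sin 2θ, −sin 2φ·sin²θ, 2sin²φ·sin²θ]. -/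

import Mathlib

/-! Both outcome probabilities are affine in `(λ₂, x, y)` and sum to one, so the two score
vectors are `±g` with `g = (-cos θ, sin θ cos φ, -sin θ sin φ)` and the Fisher matrix is
`g gᵀ (1/p + 1/(1-p)) = g gᵀ / (p (1-p))`. At `x = y = 0` one has
`p = (1 + (1-2λ₂) cos θ)/2`, hence `4 p (1-p) = 1 - cos²θ (1-2λ₂)²`. -/

open Matrix MeasureTheory
noncomputable section

/-- The qubit state with eigenvalue parameter `l = λ₂` and off-diagonal entry
`ρ₁₂ = x + i·y` (so `x = Re ρ₁₂`, `y = Im ρ₁₂`). -/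
def qubitState (l x y : ℝ) : Matrix (Fin 2) (Fin 2) ℂ :=
  !![((1 - l : ℝ) : ℂ), (x : ℂ) + (y : ℂ) * Complex.I;
     (x : ℂ) - (y : ℂ) * Complex.I, ((l : ℝ) : ℂ)]

/-- Outcome vectors of the setting `s = (θ, φ)`: `|e⁺⟩ = cos(θ/2)|0⟩ + e^{iφ} sin(θ/2)|1⟩`
(for `o = true`) and its orthogonal complement (for `o = false`). -/
def outcomeVec (θ φ : ℝ) : Bool → Fin 2 → ℂ
  | true => ![((Real.cos (θ / 2) : ℝ) : ℂ),
      Complex.exp ((φ : ℂ) * Complex.I) * ((Real.sin (θ / 2) : ℝ) : ℂ)]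
  | false => ![((Real.sin (θ / 2) : ℝ) : ℂ),
      -(Complex.exp ((φ : ℂ) * Complex.I)) * ((Real.cos (θ / 2) : ℝ) : ℂ)]

/-- Outcome probability `p(o|s) = ⟨e^o_s, ρ(l,x,y) e^o_s⟩`. -/
def outcomeProb (l x y θ φ : ℝ) (o : Bool) : ℝ :=
  (star (outcomeVec θ φ o) ⬝ᵥ (qubitState l x y) *ᵥ (outcomeVec θ φ o)).re

/-- The gradient `(∂_{λ₂} p, ∂_x p, ∂_y p)` of the outcome probability with respect to the
parameters `(λ₂, Re ρ₁₂, Im ρ₁₂)`, evaluated at `x = y = 0`. -/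
def probGrad (l θ φ : ℝ) (o : Bool) : Fin 3 → ℝ :=
  ![deriv (fun t => outcomeProb t 0 0 θ φ o) l,
    deriv (fun t => outcomeProb l t 0 θ φ o) 0,
    deriv (fun t => outcomeProb l 0 t θ φ o) 0]

/-- The 3×3 classical Fisher information matrix of the setting `s = (θ, φ)` at the state
`ρ = Diag(1−λ₂, λ₂)`, in the parameters `(λ₂, Re ρ₁₂, Im ρ₁₂)`. -/
def qubitFisher (l θ φ : ℝ) : Matrix (Fin 3) (Fin 3) ℝ :=
  Matrix.of fun a b =>
    ∑ o : Bool, probGrad l θ φ o a * probGrad l θ φ o b / outcomeProb l 0 0 θ φ o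

/-- The uniform probability measure `(1/4π)·sin θ dθ dφ` on settings
`(θ, φ) ∈ [0,π] × [0,2π]`. -/
def settingMeasure : Measure (ℝ × ℝ) :=
  (volume.restrict (Set.Icc (0 : ℝ) Real.pi ×ˢ Set.Icc (0 : ℝ) (2 * Real.pi))).withDensity
    fun s => ENNReal.ofReal (Real.sin s.1 / (4 * Real.pi))

/-- The mean Fisher information matrix `Ī(ρ)` over uniformly random settings. -/
def meanQubitFisher (l : ℝ) : Matrix (Fin 3) (Fin 3) ℝ :=
  Matrix.of fun a b => ∫ s : ℝ × ℝ, qubitFisher l s.1 s.2 a b ∂settingMeasure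

end

open ComplexConjugate in
lemma re_star_dotProduct_qubitState_mulVec (l x y : ℝ) (v : Fin 2 → ℂ) :
    (star v ⬝ᵥ qubitState l x y *ᵥ v).re =
      (1 - l) * Complex.normSq (v 0) + l * Complex.normSq (v 1)
        + 2 * (x * (conj (v 0) * v 1).re - y * (conj (v 0) * v 1).im) := by
  simp only [dotProduct, mulVec, qubitState, Fin.sum_univ_two, Pi.star_apply, RCLike.star_def,
    of_apply, cons_val', cons_val_fin_one, cons_val_zero, cons_val_one, Complex.normSq_apply,
    Complex.add_re, Complex.sub_re, Complex.mul_re, Complex.add_im, Complex.sub_im,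
    Complex.mul_im, Complex.conj_re, Complex.conj_im, Complex.ofReal_re, Complex.ofReal_im,
    Complex.I_re, Complex.I_im]
  ring

lemma outcomeProb_true (l x y θ φ : ℝ) :
    outcomeProb l x y θ φ true =
      (1 + (1 - 2 * l) * Real.cos θ) / 2 + x * Real.sin θ * Real.cos φ
        - y * Real.sin θ * Real.sin φ := by
  obtain ⟨t, rfl⟩ : ∃ t, θ = 2 * t := ⟨θ / 2, by ring⟩
  rw [outcomeProb, re_star_dotProduct_qubitState_mulVec, Real.cos_two_mul, Real.sin_two_mul]
  simp only [outcomeVec, mul_div_cancel_left₀ t two_ne_zero, Complex.exp_mul_I,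
    ← Complex.ofReal_cos, ← Complex.ofReal_sin,
    cons_val_zero, cons_val_one, cons_val_fin_one, Complex.normSq_apply, Complex.conj_ofReal,
    Complex.add_re, Complex.mul_re, Complex.add_im, Complex.mul_im, Complex.ofReal_re,
    Complex.ofReal_im, Complex.I_re, Complex.I_im]
  linear_combination l * Real.sin t ^ 2 * Real.sin_sq_add_cos_sq φ + l * Real.sin_sq_add_cos_sq t

lemma outcomeProb_false (l x y θ φ : ℝ) :
    outcomeProb l x y θ φ false = 1 - outcomeProb l x y θ φ true := by
  obtain ⟨t, rfl⟩ : ∃ t, θ = 2 * t := ⟨θ / 2, by ring⟩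
  rw [outcomeProb_true, outcomeProb, re_star_dotProduct_qubitState_mulVec, Real.cos_two_mul,
    Real.sin_two_mul]
  simp only [outcomeVec, mul_div_cancel_left₀ t two_ne_zero, Complex.exp_mul_I,
    ← Complex.ofReal_cos, ← Complex.ofReal_sin,
    cons_val_zero, cons_val_one, cons_val_fin_one, Complex.normSq_apply, Complex.conj_ofReal,
    Complex.add_re, Complex.mul_re, Complex.add_im, Complex.mul_im, Complex.ofReal_re,
    Complex.ofReal_im, Complex.I_re, Complex.I_im, Complex.neg_re, Complex.neg_im]
  linear_combination
    l * Real.cos t ^ 2 * Real.sin_sq_add_cos_sq φ + (1 - l) * Real.sin_sq_add_cos_sq t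

lemma probGrad_true (l θ φ : ℝ) :
    probGrad l θ φ true =
      ![-Real.cos θ, Real.sin θ * Real.cos φ, -(Real.sin θ * Real.sin φ)] := by
  simp [probGrad, outcomeProb_true, neg_div]

lemma probGrad_false (l θ φ : ℝ) : probGrad l θ φ false = -probGrad l θ φ true := by
  simp [probGrad, outcomeProb_false]

lemma outcomeProb_true_mem_Ioo {l : ℝ} (hl0 : 0 < l) (hl1 : l < 1) (θ φ : ℝ) :
    outcomeProb l 0 0 θ φ true ∈ Set.Ioo 0 1 := by
  have hlt : |(1 - 2 * l) * Real.cos θ| < 1 := by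
    rw [abs_mul]
    exact mul_lt_one_of_nonneg_of_lt_one_left (abs_nonneg _)
      (abs_lt.2 ⟨by linarith, by linarith⟩) (Real.abs_cos_le_one θ)
  rw [outcomeProb_true]
  constructor <;> linarith [abs_lt.1 hlt]

lemma outcomeProb_true_mul_false (l θ φ : ℝ) :
    outcomeProb l 0 0 θ φ true * outcomeProb l 0 0 θ φ false =
      (1 - Real.cos θ ^ 2 * (1 - 2 * l) ^ 2) / 4 := by
  rw [outcomeProb_false, outcomeProb_true]
  ring

lemma qubitFisher_eq_smul_vecMulVec {l : ℝ} (hl0 : 0 < l) (hl1 : l < 1) (θ φ : ℝ) :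
    qubitFisher l θ φ =
      (outcomeProb l 0 0 θ φ true * outcomeProb l 0 0 θ φ false)⁻¹ •
        vecMulVec (probGrad l θ φ true) (probGrad l θ φ true) := by
  obtain ⟨hp0, hp1⟩ := outcomeProb_true_mem_Ioo hl0 hl1 θ φ
  have hq0 : 1 - outcomeProb l 0 0 θ φ true ≠ 0 := by linarith
  ext a b
  simp only [qubitFisher, of_apply, Fintype.sum_bool, probGrad_false, outcomeProb_false,
    Pi.neg_apply, Matrix.smul_apply, vecMulVec_apply, smul_eq_mul]
  field_simp
  ring

theorem qubitFisher_eq_general (l θ φ : ℝ) (hl : 0 < l) (hl2 : l ≤ 1 / 2) :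
    qubitFisher l θ φ =
      (2 / (1 - Real.cos θ ^ 2 * (1 - 2 * l) ^ 2)) •
        !![2 * Real.cos θ ^ 2, -Real.cos φ * Real.sin (2 * θ), Real.sin φ * Real.sin (2 * θ);
           -Real.cos φ * Real.sin (2 * θ), 2 * Real.cos φ ^ 2 * Real.sin θ ^ 2,
             -Real.sin (2 * φ) * Real.sin θ ^ 2;
           Real.sin φ * Real.sin (2 * θ), -Real.sin (2 * φ) * Real.sin θ ^ 2,
             2 * Real.sin φ ^ 2 * Real.sin θ ^ 2] := by
  rw [qubitFisher_eq_smul_vecMulVec hl (by linarith), outcomeProb_true_mul_false, probGrad_true]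
  ext a b
  fin_cases a <;> fin_cases b <;> simp [vecMulVec, Real.sin_two_mul] <;> ring

/-- the Fisher information matrix of the setting `s = (θ, φ)` at
`ρ = Diag(1−λ₂, λ₂)` equals `(2/(1 − cos²θ·(1−2λ₂)²)) · M(θ,φ)`. -/
theorem qubitFisher_eq (l θ φ : ℝ) (hl : 0 < l) (hl2 : l ≤ 1 / 2)
    (hθ : θ ∈ Set.Icc 0 Real.pi) (hφ : φ ∈ Set.Icc 0 (2 * Real.pi)) :
    qubitFisher l θ φ =
      (2 / (1 - Real.cos θ ^ 2 * (1 - 2 * l) ^ 2)) •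
        !![2 * Real.cos θ ^ 2, -Real.cos φ * Real.sin (2 * θ), Real.sin φ * Real.sin (2 * θ);
           -Real.cos φ * Real.sin (2 * θ), 2 * Real.cos φ ^ 2 * Real.sin θ ^ 2,
             -Real.sin (2 * φ) * Real.sin θ ^ 2;
           Real.sin φ * Real.sin (2 * θ), -Real.sin (2 * φ) * Real.sin θ ^ 2,
             2 * Real.sin φ ^ 2 * Real.sin θ ^ 2] :=
  qubitFisher_eq_general l θ φ hl hl2
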